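/- Let X be a cluster-tilting subcategory of a triangulated category C with split idempotents, and let A →f B →g D →h ΣA be a distinguished triangle in C. If ΣA lies in X, then ḡ is an epimorphism in the quotient category C/X; if A lies in X, then ḡ is a monomorphism in C/X. -/

import Mathlib

/-!
If `ΣA ∈ X` and `g ≫ k` factors through `X`, choose a triangle `X₀ ⟶ X₁ ⟶ E ⟶ ΣX₀` with last
map `r` for the target `E` of `k`. Rigidity (`Hom(X, ΣX) = 0`) kills `g ≫ k ≫ r`, so `k ≫ r`
factors through `h : D ⟶ ΣA`, and then vanishes by rigidity again; hence `k` factors through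
`X₁`. If `A ∈ X` and `k ≫ g = α ≫ β` with `β : X' ⟶ D`, rigidity gives `β ≫ h = 0`, so `β`
lifts along `g`, and `k` minus the lifted map factors through `f`, hence through `A`.
-/

open CategoryTheory CategoryTheory.Limits CategoryTheory.Pretriangulated

universe v u

variable {C : Type u} [Category.{v} C] [Preadditive C] [HasZeroObject C]
  [HasShift C ℤ] [∀ n : ℤ, (shiftFunctor C n).Additive] [Pretriangulated C]

/-- `f` factors through an object satisfying `X`. -/
def FactorsThru (X : C → Prop) {A B : C} (f : A ⟶ B) : Prop :=
  ∃ (X₀ : C) (g : A ⟶ X₀) (h : X₀ ⟶ B), X X₀ ∧ g ≫ h = f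

/-- The hom relation on `C` identifying two morphisms when their difference factors
through an object of `X`; the quotient category `C/X` is the quotient by this relation. -/
def homRelOf (X : C → Prop) : HomRel C :=
  fun {A B : C} (f g : A ⟶ B) => FactorsThru X (f - g)

/-- The additive quotient category `C/X`. -/
abbrev QuotCat (X : C → Prop) := CategoryTheory.Quotient (homRelOf X)

/-- The quotient functor `C ⥤ C/X`, sending a morphism `f` to its class `f̄`. -/
abbrev quotFunctor (X : C → Prop) : C ⥤ QuotCat X := Quotient.functor _

/-- `X` is a full additive subcategory: it contains the zero objects and is closed under
isomorphisms, finite direct sums and direct summands. -/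
structure IsAdditiveClosed (X : C → Prop) : Prop where
  zero : ∀ Z : C, IsZero Z → X Z
  iso : ∀ {A B : C}, (A ≅ B) → X A → X B
  biprod : ∀ {A B : C} (b : BinaryBicone A B), Nonempty b.IsBilimit → X A → X B → X b.pt
  summand : ∀ {A B : C} (i : A ⟶ B) (p : B ⟶ A), i ≫ p = 𝟙 A → X B → X A

/-- `X` is a cluster-tilting subcategory of the triangulated category `C`:
it is a full additive subcategory such that (i) `Hom(X₁, ΣX₂) = 0` for all `X₁, X₂ ∈ X`, and
(ii) every object `A` fits into a distinguished triangle `X₀ ⟶ X₁ ⟶ A ⟶ ΣX₀` with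
`X₀, X₁ ∈ X`. -/
structure IsClusterTilting (X : C → Prop) extends IsAdditiveClosed X : Prop where
  hom_shift_zero : ∀ {X₁ X₂ : C}, X X₁ → X X₂ → ∀ f : X₁ ⟶ X₂⟦(1 : ℤ)⟧, f = 0
  exists_triangle : ∀ A : C, ∃ (X₀ X₁ : C) (f : X₀ ⟶ X₁) (g : X₁ ⟶ A) (h : A ⟶ X₀⟦(1 : ℤ)⟧),
    X X₀ ∧ X X₁ ∧ Triangle.mk f g h ∈ distTriang C

/-- `f : A ⟶ B` is `X`-monic: every morphism from `A` to an object of `X` factors through `f`. -/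
def XMonic (X : C → Prop) {A B : C} (f : A ⟶ B) : Prop :=
  ∀ X' : C, X X' → ∀ u : A ⟶ X', ∃ v : B ⟶ X', f ≫ v = u

/-- `f : A ⟶ B` is `X`-epic: every morphism from an object of `X` to `B` factors through `f`. -/
def XEpic (X : C → Prop) {A B : C} (f : A ⟶ B) : Prop :=
  ∀ X' : C, X X' → ∀ u : X' ⟶ B, ∃ v : X' ⟶ A, v ≫ f = u

variable {X : C → Prop}

namespace FactorsThru

section Category

omit [Preadditive C] [HasZeroObject C] [HasShift C ℤ] [∀ n : ℤ, (shiftFunctor C n).Additive]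
  [Pretriangulated C]

lemma comp_of_mem {A E B : C} (hE : X E) (u : A ⟶ E) (w : E ⟶ B) : FactorsThru X (u ≫ w) :=
  ⟨E, u, w, hE, rfl⟩

lemma comp_left {A B E : C} {u : B ⟶ E} (hu : FactorsThru X u) (w : A ⟶ B) :
    FactorsThru X (w ≫ u) := by
  obtain ⟨X₀, a, b, hX₀, rfl⟩ := hu
  exact ⟨X₀, w ≫ a, b, hX₀, Category.assoc w a b⟩

lemma comp_right {A B E : C} {u : A ⟶ B} (hu : FactorsThru X u) (w : B ⟶ E) :
    FactorsThru X (u ≫ w) := by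
  obtain ⟨X₀, a, b, hX₀, rfl⟩ := hu
  exact ⟨X₀, a, b ≫ w, hX₀, (Category.assoc a b w).symm⟩

end Category

end FactorsThru

section Preadditive

omit [HasZeroObject C] [HasShift C ℤ] [∀ n : ℤ, (shiftFunctor C n).Additive] [Pretriangulated C]

namespace FactorsThru

lemma zero [HasZeroObject C] (hX : IsAdditiveClosed X) {A B : C} :
    FactorsThru X (0 : A ⟶ B) := by
  obtain ⟨Z, hZ⟩ := HasZeroObject.zero (C := C)
  exact ⟨Z, 0, 0, hX.zero Z hZ, comp_zero⟩

lemma neg {A B : C} {u : A ⟶ B} (hu : FactorsThru X u) : FactorsThru X (-u) := by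
  obtain ⟨X₀, a, b, hX₀, rfl⟩ := hu
  exact ⟨X₀, a, -b, hX₀, Preadditive.comp_neg a b⟩

lemma add [HasBinaryBiproducts C] (hX : IsAdditiveClosed X) {A B : C} {u v : A ⟶ B}
    (hu : FactorsThru X u) (hv : FactorsThru X v) : FactorsThru X (u + v) := by
  obtain ⟨X₀, a, b, hX₀, rfl⟩ := hu
  obtain ⟨X₁, c, d, hX₁, rfl⟩ := hv
  refine ⟨X₀ ⊞ X₁, biprod.lift a c, biprod.desc b d,
    hX.biprod _ ⟨BinaryBiproduct.isBilimit X₀ X₁⟩ hX₀ hX₁, ?_⟩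
  simp

end FactorsThru

variable [HasZeroObject C] [HasBinaryBiproducts C]

lemma IsAdditiveClosed.congruence_homRelOf (hX : IsAdditiveClosed X) :
    Congruence (homRelOf X) where
  equivalence :=
    { refl := fun _ => by simpa [homRelOf] using FactorsThru.zero hX
      symm := fun huv => by simpa [homRelOf] using huv.neg
      trans := fun huv hvw => by simpa [homRelOf] using huv.add hX hvw }
  comp_left w _ _ huv := by simpa [homRelOf, Preadditive.comp_sub] using huv.comp_left w
  comp_right w huv := by simpa [homRelOf, Preadditive.sub_comp] using huv.comp_right w

lemma IsAdditiveClosed.quotFunctor_map_eq_iff (hX : IsAdditiveClosed X) {A B : C}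
    (u v : A ⟶ B) : (quotFunctor X).map u = (quotFunctor X).map v ↔ FactorsThru X (u - v) :=
  have := hX.congruence_homRelOf
  Quotient.functor_map_eq_iff _ u v

lemma IsAdditiveClosed.epi_quotFunctor_map (hX : IsAdditiveClosed X) {B D : C} (g : B ⟶ D)
    (hg : ∀ {E : C} (k : D ⟶ E), FactorsThru X (g ≫ k) → FactorsThru X k) :
    Epi ((quotFunctor X).map g) := by
  refine ⟨fun {E} u v huv => ?_⟩
  obtain ⟨k₁, rfl⟩ := (quotFunctor X).map_surjective u
  obtain ⟨k₂, rfl⟩ := (quotFunctor X).map_surjective v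
  rw [← Functor.map_comp, ← Functor.map_comp, hX.quotFunctor_map_eq_iff,
    ← Preadditive.comp_sub] at huv
  exact (hX.quotFunctor_map_eq_iff _ _).2 (hg _ huv)

lemma IsAdditiveClosed.mono_quotFunctor_map (hX : IsAdditiveClosed X) {B D : C} (g : B ⟶ D)
    (hg : ∀ {E : C} (k : E ⟶ B), FactorsThru X (k ≫ g) → FactorsThru X k) :
    Mono ((quotFunctor X).map g) := by
  refine ⟨fun {E} u v huv => ?_⟩
  obtain ⟨k₁, rfl⟩ := (quotFunctor X).map_surjective u
  obtain ⟨k₂, rfl⟩ := (quotFunctor X).map_surjective v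
  rw [← Functor.map_comp, ← Functor.map_comp, hX.quotFunctor_map_eq_iff,
    ← Preadditive.sub_comp] at huv
  exact (hX.quotFunctor_map_eq_iff _ _).2 (hg _ huv)

end Preadditive

namespace IsClusterTilting

lemma comp_eq_zero_of_factorsThru (hX : IsClusterTilting X) {X₀ B E : C} (hX₀ : X X₀)
    {u : B ⟶ E} (hu : FactorsThru X u) (r : E ⟶ X₀⟦(1 : ℤ)⟧) : u ≫ r = 0 := by
  obtain ⟨X', a, b, hX', rfl⟩ := hu
  rw [Category.assoc, hX.hom_shift_zero hX' hX₀ (b ≫ r), comp_zero]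

lemma factorsThru_of_factorsThru_mor₂_comp (hX : IsClusterTilting X) {T : Triangle C}
    (hT : T ∈ distTriang C) (hT₁ : X (T.obj₁⟦(1 : ℤ)⟧)) {E : C} (k : T.obj₃ ⟶ E)
    (hk : FactorsThru X (T.mor₂ ≫ k)) : FactorsThru X k := by
  obtain ⟨X₀, X₁, p, q, r, hX₀, hX₁, hE⟩ := hX.exists_triangle E
  have hgkr : T.mor₂ ≫ k ≫ r = 0 := by
    rw [← Category.assoc]; exact hX.comp_eq_zero_of_factorsThru hX₀ hk r
  obtain ⟨t, ht⟩ := Triangle.yoneda_exact₂ _ (rot_of_distTriang _ hT) (k ≫ r) hgkr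
  have hkr : k ≫ r = 0 :=
    ht.trans (by rw [show t = 0 from hX.hom_shift_zero hT₁ hX₀ t]; exact comp_zero)
  obtain ⟨m, hm⟩ := Triangle.coyoneda_exact₃ _ hE k hkr
  exact hm ▸ FactorsThru.comp_of_mem hX₁ m q

lemma factorsThru_of_factorsThru_comp_mor₂ (hX : IsClusterTilting X) {T : Triangle C}
    (hT : T ∈ distTriang C) (hT₁ : X T.obj₁) {E : C} (k : E ⟶ T.obj₂)
    (hk : FactorsThru X (k ≫ T.mor₂)) : FactorsThru X k := by
  obtain ⟨X', α, β, hX', hαβ⟩ := hk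
  obtain ⟨γ, hγ⟩ := Triangle.coyoneda_exact₃ _ hT β (hX.hom_shift_zero hX' hT₁ _)
  have hkg : (k - α ≫ γ) ≫ T.mor₂ = 0 := by
    rw [Preadditive.sub_comp, Category.assoc, ← hγ, hαβ, sub_self]
  obtain ⟨δ, hδ⟩ := Triangle.coyoneda_exact₂ _ hT (k - α ≫ γ) hkg
  have hk : k = δ ≫ T.mor₁ + α ≫ γ := by rw [← hδ, sub_add_cancel]
  rw [hk]
  exact (FactorsThru.comp_of_mem hT₁ δ T.mor₁).add hX.toIsAdditiveClosed
    (FactorsThru.comp_of_mem hX' α γ)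

end IsClusterTilting

theorem epi_of_shift_mem_and_mono_of_mem_general
    (X : C → Prop) (hX : IsClusterTilting X)
    {A B D : C} (f : A ⟶ B) (g : B ⟶ D) (h : D ⟶ A⟦(1 : ℤ)⟧)
    (hT : Triangle.mk f g h ∈ distTriang C) :
    (X (A⟦(1 : ℤ)⟧) → Epi ((quotFunctor X).map g)) ∧
    (X A → Mono ((quotFunctor X).map g)) :=
  ⟨fun hA => hX.epi_quotFunctor_map g (hX.factorsThru_of_factorsThru_mor₂_comp hT hA),
    fun hA => hX.mono_quotFunctor_map g (hX.factorsThru_of_factorsThru_comp_mor₂ hT hA)⟩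

/-- For a distinguished triangle `A ⟶ B ⟶ D ⟶ ΣA` over a cluster-tilting
subcategory `X`: if `ΣA ∈ X` then `ḡ` is an epimorphism in `C/X`; if `A ∈ X` then `ḡ` is a
monomorphism in `C/X`. -/
theorem epi_of_shift_mem_and_mono_of_mem [IsIdempotentComplete C]
    (X : C → Prop) (hX : IsClusterTilting X)
    {A B D : C} (f : A ⟶ B) (g : B ⟶ D) (h : D ⟶ A⟦(1 : ℤ)⟧)
    (hT : Triangle.mk f g h ∈ distTriang C) :
    (X (A⟦(1 : ℤ)⟧) → Epi ((quotFunctor X).map g)) ∧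
    (X A → Mono ((quotFunctor X).map g)) :=
  epi_of_shift_mem_and_mono_of_mem_general X hX f g h hT
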